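/- Small-time Lipschitz estimate for PMP flows: assume f is bounded and f, L, Φ are twice continuously differentiable in (x,θ) with bounded, Lipschitz partial derivatives. For a control θ ∈ L^∞([0,T],Θ), let x^θ solve ẋ_t = f(x_t, θ_t), x_0 = x₀, and let p^θ solve ṗ_t = −∇_x H(x_t^θ, p_t, θ_t), p_T = −∇_x Φ(x_T^θ, y₀). Then there exists T₀ > 0 such that for all T ∈ [0,T₀) and all controls θ¹, θ² ∈ L^∞([0,T],Θ), ‖x^{θ¹} − x^{θ²}‖_{L^∞} + ‖p^{θ¹} − p^{θ²}‖_{L^∞} ≤ C(T) ‖θ¹ − θ²‖_{L^∞}, where C(T) > 0 satisfies C(T) → 0 as T → 0. -/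

import Mathlib

/-!
Let `X`, `P`, `Θ` be the sup norms over `[0, T]` of the differences of the states, costates
and controls. Everything closes by absorption once `K T ≤ 1/2`. The state equation gives
`X ≤ K T (X + Θ)`, hence `X ≤ 2 K T Θ`. A Gronwall-type bound gives `‖p‖ ≤ 2K + 1` for the
costates, so along the flows `∇ₓH` is Lipschitz with constant `O(K²)`, and
`P ≤ K X + K T P + O(K²) T (X + Θ)` yields `P = O(T) Θ`.

The integral equations are read literally, with the convention that a non-integrable integrand
has integral `0`. Integrability is recovered by continuation: past the last time up to which
the integrand is integrable, the solution is frozen at its initial (or terminal) value, and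
there the integrand is measurable.
-/

noncomputable section
open MeasureTheory Set Filter RealInnerProductSpace

/-- `ℝ^n` as a Euclidean space. -/
abbrev Ed (n : ℕ) := EuclideanSpace ℝ (Fin n)

/-- Admissible controls: measurable, `Θ`-valued, essentially bounded. -/
def IsAdmissible {m : ℕ} (Θ : Set (Ed m)) (θ : ℝ → Ed m) : Prop :=
  Measurable θ ∧ (∀ t, θ t ∈ Θ) ∧ ∃ C : ℝ, ∀ t, ‖θ t‖ ≤ C

/-- The Hamiltonian `H(x, p, θ) = p·f(x, θ) - L(x, θ)`. -/
def Ham {d m : ℕ} (f : Ed d → Ed m → Ed d) (L : Ed d → Ed m → ℝ)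
    (x p : Ed d) (v : Ed m) : ℝ :=
  ⟪p, f x v⟫ - L x v

section Bootstrap

variable {E : Type*} [NormedAddCommGroup E]

theorem aestronglyMeasurable_restrict_Ioo_of_forall_lt {μ : Measure ℝ} {g : ℝ → E} {a b : ℝ}
    (h : ∀ t < b, IntegrableOn g (Ioc a t) μ) : AEStronglyMeasurable g (μ.restrict (Ioo a b)) := by
  have hcover : Ioo a b = ⋃ q : {q : ℚ // (q : ℝ) < b}, Ioc a (q : ℝ) := by
    ext s
    simp only [mem_Ioo, mem_iUnion, mem_Ioc, Subtype.exists, exists_prop]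
    constructor
    · rintro ⟨has, hsb⟩
      obtain ⟨q, hsq, hqb⟩ := exists_rat_btwn hsb
      exact ⟨q, hqb, has, hsq.le⟩
    · rintro ⟨q, hqb, has, hsq⟩
      exact ⟨has, hsq.trans_lt hqb⟩
  rw [hcover, aestronglyMeasurable_iUnion_iff]
  exact fun q => (h q q.2).aestronglyMeasurable

/- Let `τ` be the supremum of the `t` up to which `g` is integrable: `g` is measurable on `(a, τ)`
as a countable union of intervals of integrability, and on `(τ, b]` it coincides with `g₀`. -/
theorem integrableOn_Ioc_of_eq_of_not_integrableOn {g g₀ : ℝ → E} {a b C : ℝ} (hab : a ≤ b)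
    (hg : ∀ s ∈ Ioc a b, ‖g s‖ ≤ C) (hg₀ : AEStronglyMeasurable g₀ volume)
    (heq : ∀ s ∈ Ioc a b, ¬ IntegrableOn g (Ioc a s) → g s = g₀ s) :
    IntegrableOn g (Ioc a b) := by
  set S := {t ∈ Icc a b | IntegrableOn g (Ioc a t)}
  have haS : a ∈ S := ⟨left_mem_Icc.2 hab, by simp⟩
  have hS : BddAbove S := ⟨b, fun t ht => ht.1.2⟩
  set τ := sSup S
  have haτ : a ≤ τ := le_csSup hS haS
  have hτb : τ ≤ b := csSup_le ⟨a, haS⟩ fun t ht => ht.1.2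
  have hbelow : AEStronglyMeasurable g (volume.restrict (Ioo a τ)) := by
    refine aestronglyMeasurable_restrict_Ioo_of_forall_lt fun t ht => ?_
    obtain ⟨t', ht', htt'⟩ := exists_lt_of_lt_csSup ⟨a, haS⟩ ht
    exact ht'.2.mono_set (Ioc_subset_Ioc_right htt'.le)
  have habove : AEStronglyMeasurable g (volume.restrict (Icc τ b)) := by
    rw [← Measure.restrict_congr_set Ioc_ae_eq_Icc]
    refine hg₀.restrict.congr ((ae_restrict_iff' measurableSet_Ioc).2
      (Eventually.of_forall fun s hs => (heq s ⟨haτ.trans_lt hs.1, hs.2⟩ fun hint => ?_).symm))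
    exact hs.1.not_ge (le_csSup hS ⟨⟨(haτ.trans_lt hs.1).le, hs.2⟩, hint⟩)
  have hmeas : AEStronglyMeasurable g (volume.restrict (Ioc a b)) := by
    refine (aestronglyMeasurable_union_iff.2 ⟨hbelow, habove⟩).mono_set fun s hs => ?_
    rcases lt_or_ge s τ with hsτ | hτs
    exacts [Or.inl ⟨hs.1, hsτ⟩, Or.inr ⟨hτs, hs.2⟩]
  exact Integrable.mono' (integrableOn_const measure_Ioc_lt_top.ne) hmeas
    ((ae_restrict_iff' measurableSet_Ioc).2 (Eventually.of_forall hg))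

variable [NormedSpace ℝ E]

theorem intervalIntegrable_of_eq_add_integral {x g g₀ : ℝ → E} {x₀ : E} {T C : ℝ} (hT : 0 ≤ T)
    (hx : ∀ t, x t = x₀ + ∫ s in 0..t, g s) (hg : ∀ s ∈ Icc 0 T, ‖g s‖ ≤ C)
    (hg₀ : AEStronglyMeasurable g₀ volume) (heq : ∀ s ∈ Icc 0 T, x s = x₀ → g s = g₀ s) :
    IntervalIntegrable g volume 0 T := by
  rw [intervalIntegrable_iff_integrableOn_Ioc_of_le hT]
  refine integrableOn_Ioc_of_eq_of_not_integrableOn hT (fun s hs => hg s (Ioc_subset_Icc_self hs))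
    hg₀ fun s hs hint => heq s (Ioc_subset_Icc_self hs) ?_
  rw [hx s, intervalIntegral.integral_undef, add_zero]
  rwa [intervalIntegrable_iff_integrableOn_Ioc_of_le hs.1.le]

theorem intervalIntegrable_of_eq_add_integral_rev {p g g₀ : ℝ → E} {c : E} {T C : ℝ}
    (hT : 0 ≤ T) (hp : ∀ t, p t = c + ∫ s in t..T, g s) (hg : ∀ s ∈ Icc 0 T, ‖g s‖ ≤ C)
    (hg₀ : AEStronglyMeasurable g₀ volume) (heq : ∀ s ∈ Icc 0 T, p s = c → g s = g₀ s) :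
    IntervalIntegrable g volume 0 T := by
  have hrefl : ∀ u ∈ Icc 0 T, T - u ∈ Icc 0 T := fun u hu =>
    ⟨sub_nonneg.2 hu.2, sub_le_self T hu.1⟩
  have hi : IntervalIntegrable (fun u => g (T - u)) volume 0 T := by
    refine intervalIntegrable_of_eq_add_integral (x := fun u => p (T - u)) (x₀ := c)
      (g₀ := fun u => g₀ (T - u)) hT (fun u => ?_) (fun u hu => hg _ (hrefl u hu))
      (hg₀.comp_measurePreserving (Measure.measurePreserving_sub_left volume T))
      (fun u hu => heq _ (hrefl u hu))
    rw [hp, intervalIntegral.integral_comp_sub_left, sub_zero]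
  simpa using (hi.comp_sub_left T).symm

theorem continuousOn_of_eq_add_integral {x g : ℝ → E} {x₀ : E} {T : ℝ} (hT : 0 ≤ T)
    (hx : ∀ t, x t = x₀ + ∫ s in 0..t, g s) (hg : IntervalIntegrable g volume 0 T) :
    ContinuousOn x (Icc 0 T) := by
  rw [← uIcc_of_le hT]
  exact (continuousOn_const.add (intervalIntegral.continuousOn_primitive_interval' hg
    left_mem_uIcc)).congr fun t _ => hx t

theorem continuousOn_of_eq_add_integral_rev {p g : ℝ → E} {c : E} {T : ℝ} (hT : 0 ≤ T)
    (hp : ∀ t, p t = c + ∫ s in t..T, g s) (hg : IntervalIntegrable g volume 0 T) :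
    ContinuousOn p (Icc 0 T) := by
  rw [← uIcc_of_le hT]
  refine ((continuousOn_const (c := c)).sub (intervalIntegral.continuousOn_primitive_interval' hg
    right_mem_uIcc)).congr fun t _ => ?_
  rw [hp t, intervalIntegral.integral_symm, Pi.sub_apply, sub_eq_add_neg]

end Bootstrap

section APriori

variable {E : Type*} [NormedAddCommGroup E] [NormedSpace ℝ E]

/- With `N = ∫ₜᵀ ‖g‖` one gets `‖p‖ ≤ K + N` on `[t, T]`, hence
`N ≤ K T (1 + K + N) ≤ (1 + K + N) / 2`. -/
theorem norm_le_of_eq_add_integral_rev {p g : ℝ → E} {c : E} {K T : ℝ} (hKT : K * T ≤ 1 / 2)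
    (hc : ‖c‖ ≤ K) (hp : ∀ t, p t = c + ∫ s in t..T, g s)
    (hg : ∀ s ∈ Icc 0 T, ‖g s‖ ≤ K * (1 + ‖p s‖)) {t : ℝ} (ht : t ∈ Icc 0 T) :
    ‖p t‖ ≤ 2 * K + 1 := by
  have hK : 0 ≤ K := (norm_nonneg c).trans hc
  by_cases hint : IntervalIntegrable g volume t T
  swap
  · rw [hp t, intervalIntegral.integral_undef hint, add_zero]
    linarith
  set N := ∫ s in t..T, ‖g s‖
  have hN0 : 0 ≤ N := intervalIntegral.integral_nonneg ht.2 fun _ _ => norm_nonneg _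
  have hp_le : ∀ s ∈ Icc t T, ‖p s‖ ≤ K + N := by
    intro s hs
    rw [hp s]
    refine (norm_add_le _ _).trans (add_le_add hc ?_)
    refine (intervalIntegral.norm_integral_le_integral_norm hs.2).trans ?_
    exact intervalIntegral.integral_mono_interval hs.1 hs.2 le_rfl
      (Eventually.of_forall fun _ => norm_nonneg _) hint.norm
  have hN : N ≤ K * (1 + (K + N)) * T := by
    calc N ≤ ∫ _ in t..T, K * (1 + (K + N)) :=
          intervalIntegral.integral_mono_on ht.2 hint.norm intervalIntegrable_const fun s hs =>
            (hg s ⟨ht.1.trans hs.1, hs.2⟩).trans (by gcongr; exact hp_le s hs)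
      _ = K * (1 + (K + N)) * (T - t) := by
          rw [intervalIntegral.integral_const, smul_eq_mul, mul_comm]
      _ ≤ K * (1 + (K + N)) * T := by
          gcongr
          linarith [ht.1]
  nlinarith [hp_le t ⟨le_rfl, ht.2⟩,
    mul_le_mul_of_nonneg_right hKT (by positivity : 0 ≤ 1 + (K + N))]

end APriori

section SupNorm

variable {E V : Type*} [NormedAddCommGroup E] [NormedAddCommGroup V]

/-- The norm `‖u‖_{L^∞([0, T])}`; it is `0` when `‖u‖` is unbounded on `[0, T]`. -/
def supNormIcc (T : ℝ) (u : ℝ → E) : ℝ := ⨆ t : Icc (0 : ℝ) T, ‖u t‖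

theorem supNormIcc_nonneg (T : ℝ) (u : ℝ → E) : 0 ≤ supNormIcc T u :=
  Real.iSup_nonneg fun _ => norm_nonneg _

theorem supNormIcc_le {T B : ℝ} {u : ℝ → E} (hB : 0 ≤ B) (h : ∀ t ∈ Icc 0 T, ‖u t‖ ≤ B) :
    supNormIcc T u ≤ B :=
  Real.iSup_le (fun t => h t t.2) hB

theorem norm_le_supNormIcc {T t : ℝ} {u : ℝ → E} (hu : BddAbove ((fun t => ‖u t‖) '' Icc 0 T))
    (ht : t ∈ Icc 0 T) : ‖u t‖ ≤ supNormIcc T u := by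
  rw [image_eq_range] at hu
  exact le_ciSup hu ⟨t, ht⟩

variable [NormedSpace ℝ E] {K T : ℝ} (hK : 0 ≤ K) (hT : 0 ≤ T) (hKT : K * T ≤ 1 / 2)
include hK hT hKT

theorem supNormIcc_sub_le_of_eq_add_integral {f : E → V → E}
    (hf : ∀ x₁ x₂ v₁ v₂, ‖f x₁ v₁ - f x₂ v₂‖ ≤ K * (‖x₁ - x₂‖ + ‖v₁ - v₂‖))
    {x₀ : E} {x₁ x₂ : ℝ → E} {θ₁ θ₂ : ℝ → V}
    (hx₁ : ∀ t, x₁ t = x₀ + ∫ s in 0..t, f (x₁ s) (θ₁ s))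
    (hx₂ : ∀ t, x₂ t = x₀ + ∫ s in 0..t, f (x₂ s) (θ₂ s))
    (hi₁ : IntervalIntegrable (fun s => f (x₁ s) (θ₁ s)) volume 0 T)
    (hi₂ : IntervalIntegrable (fun s => f (x₂ s) (θ₂ s)) volume 0 T)
    (hX : BddAbove ((fun t => ‖(x₁ - x₂) t‖) '' Icc 0 T))
    (hΘ : BddAbove ((fun t => ‖(θ₁ - θ₂) t‖) '' Icc 0 T)) :
    supNormIcc T (x₁ - x₂) ≤ 2 * K * T * supNormIcc T (θ₁ - θ₂) := by
  set X := supNormIcc T (x₁ - x₂)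
  set Θ := supNormIcc T (θ₁ - θ₂)
  have hX0 : 0 ≤ X := supNormIcc_nonneg _ _
  have hΘ0 : 0 ≤ Θ := supNormIcc_nonneg _ _
  have hpt : ∀ t ∈ Icc 0 T, ‖(x₁ - x₂) t‖ ≤ K * (X + Θ) * T := by
    intro t ht
    have hsub : uIcc 0 t ⊆ uIcc 0 T := uIcc_subset_uIcc_left (mem_uIcc_of_le ht.1 ht.2)
    rw [Pi.sub_apply, hx₁, hx₂, add_sub_add_left_eq_sub,
      ← intervalIntegral.integral_sub (hi₁.mono_set hsub) (hi₂.mono_set hsub)]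
    refine (intervalIntegral.norm_integral_le_of_norm_le_const (C := K * (X + Θ))
      fun s hs => ?_).trans ?_
    · rw [uIoc_of_le ht.1] at hs
      have hs' : s ∈ Icc 0 T := ⟨hs.1.le, hs.2.trans ht.2⟩
      exact (hf _ _ _ _).trans (mul_le_mul_of_nonneg_left
        (add_le_add (norm_le_supNormIcc hX hs') (norm_le_supNormIcc hΘ hs')) hK)
    · rw [sub_zero, abs_of_nonneg ht.1]
      exact mul_le_mul_of_nonneg_left ht.2 (by positivity)
  have hX' : X ≤ K * (X + Θ) * T := supNormIcc_le (by positivity) hpt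
  nlinarith

theorem supNormIcc_sub_le_of_eq_add_integral_rev {G : E → E → V → E} {c : E → E} {M : ℝ}
    (hc : ∀ x₁ x₂, ‖c x₁ - c x₂‖ ≤ K * ‖x₁ - x₂‖)
    (hG : ∀ x₁ x₂ p₁ p₂ v₁ v₂, ‖G x₁ p₁ v₁ - G x₂ p₂ v₂‖
      ≤ K * ‖p₁ - p₂‖ + K * (‖p₂‖ + 1) * (‖x₁ - x₂‖ + ‖v₁ - v₂‖))
    {x₁ x₂ p₁ p₂ : ℝ → E} {θ₁ θ₂ : ℝ → V}
    (hp₁ : ∀ t, p₁ t = c (x₁ T) + ∫ s in t..T, G (x₁ s) (p₁ s) (θ₁ s))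
    (hp₂ : ∀ t, p₂ t = c (x₂ T) + ∫ s in t..T, G (x₂ s) (p₂ s) (θ₂ s))
    (hi₁ : IntervalIntegrable (fun s => G (x₁ s) (p₁ s) (θ₁ s)) volume 0 T)
    (hi₂ : IntervalIntegrable (fun s => G (x₂ s) (p₂ s) (θ₂ s)) volume 0 T)
    (hM : ∀ t ∈ Icc 0 T, ‖p₂ t‖ ≤ M)
    (hX : BddAbove ((fun t => ‖(x₁ - x₂) t‖) '' Icc 0 T))
    (hP : BddAbove ((fun t => ‖(p₁ - p₂) t‖) '' Icc 0 T))
    (hΘ : BddAbove ((fun t => ‖(θ₁ - θ₂) t‖) '' Icc 0 T)) :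
    supNormIcc T (p₁ - p₂) ≤ 2 * K * supNormIcc T (x₁ - x₂)
      + 2 * K * (M + 1) * T * (supNormIcc T (x₁ - x₂) + supNormIcc T (θ₁ - θ₂)) := by
  set X := supNormIcc T (x₁ - x₂)
  set P := supNormIcc T (p₁ - p₂)
  set Θ := supNormIcc T (θ₁ - θ₂)
  have hX0 : 0 ≤ X := supNormIcc_nonneg _ _
  have hP0 : 0 ≤ P := supNormIcc_nonneg _ _
  have hΘ0 : 0 ≤ Θ := supNormIcc_nonneg _ _
  have hM0 : 0 ≤ M := (norm_nonneg _).trans (hM 0 (left_mem_Icc.2 hT))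
  have hT_mem : T ∈ Icc 0 T := right_mem_Icc.2 hT
  have hpt : ∀ t ∈ Icc 0 T, ‖(p₁ - p₂) t‖ ≤ K * X + (K * P + K * (M + 1) * (X + Θ)) * T := by
    intro t ht
    have hsub : uIcc t T ⊆ uIcc 0 T :=
      uIcc_subset_uIcc (mem_uIcc_of_le ht.1 ht.2) right_mem_uIcc
    rw [Pi.sub_apply, hp₁, hp₂, add_sub_add_comm,
      ← intervalIntegral.integral_sub (hi₁.mono_set hsub) (hi₂.mono_set hsub)]
    refine (norm_add_le _ _).trans (add_le_add ?_ ?_)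
    · exact (hc _ _).trans (mul_le_mul_of_nonneg_left (norm_le_supNormIcc hX hT_mem) hK)
    refine (intervalIntegral.norm_integral_le_of_norm_le_const
      (C := K * P + K * (M + 1) * (X + Θ)) fun s hs => ?_).trans ?_
    · rw [uIoc_of_le ht.2] at hs
      have hs' : s ∈ Icc 0 T := ⟨ht.1.trans hs.1.le, hs.2⟩
      refine (hG _ _ _ _ _ _).trans (add_le_add ?_ ?_)
      · exact mul_le_mul_of_nonneg_left (norm_le_supNormIcc hP hs') hK
      · exact mul_le_mul (mul_le_mul_of_nonneg_left (by linarith [hM s hs']) hK)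
          (add_le_add (norm_le_supNormIcc hX hs') (norm_le_supNormIcc hΘ hs'))
          (by positivity) (by positivity)
    · rw [abs_of_nonneg (sub_nonneg.2 ht.2)]
      exact mul_le_mul_of_nonneg_left (by linarith [ht.1]) (by positivity)
  have hP' : P ≤ K * X + (K * P + K * (M + 1) * (X + Θ)) * T :=
    supNormIcc_le (by positivity) hpt
  nlinarith [mul_le_mul_of_nonneg_right hKT hP0]

end SupNorm

section Derivatives

variable {E V G : Type*} [NormedAddCommGroup E] [NormedAddCommGroup V] [NormedAddCommGroup G]

theorem LipschitzWith.norm_sub_le_mul_add {K : NNReal} {F : E × V → G} (hF : LipschitzWith K F)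
    (x₁ x₂ : E) (v₁ v₂ : V) : ‖F (x₁, v₁) - F (x₂, v₂)‖ ≤ K * (‖x₁ - x₂‖ + ‖v₁ - v₂‖) := by
  rw [← dist_eq_norm]
  refine (hF.dist_le_mul _ _).trans (mul_le_mul_of_nonneg_left ?_ K.coe_nonneg)
  rw [Prod.dist_eq, dist_eq_norm, dist_eq_norm]
  exact max_le_add_of_nonneg (norm_nonneg _) (norm_nonneg _)

variable [NormedSpace ℝ E] [NormedSpace ℝ V] [NormedSpace ℝ G]

def fderivFst (F : E × V → G) (x : E) (v : V) : E →L[ℝ] G :=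
  (fderiv ℝ F (x, v)).comp (ContinuousLinearMap.inl ℝ E V)

theorem hasFDerivAt_fderivFst {F : E × V → G} {x : E} {v : V}
    (hF : DifferentiableAt ℝ F (x, v)) : HasFDerivAt (fun x' => F (x', v)) (fderivFst F x v) x :=
  hF.hasFDerivAt.comp x (hasFDerivAt_prodMk_left x v)

theorem norm_fderivFst_le (F : E × V → G) (x : E) (v : V) :
    ‖fderivFst F x v‖ ≤ ‖fderiv ℝ F (x, v)‖ :=
  (ContinuousLinearMap.opNorm_comp_le _ _).trans
    (mul_le_of_le_one_right (norm_nonneg _) (ContinuousLinearMap.norm_inl_le_one ℝ E V))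

theorem norm_fderivFst_sub_le (F : E × V → G) (x₁ x₂ : E) (v₁ v₂ : V) :
    ‖fderivFst F x₁ v₁ - fderivFst F x₂ v₂‖ ≤ ‖fderiv ℝ F (x₁, v₁) - fderiv ℝ F (x₂, v₂)‖ := by
  rw [fderivFst, fderivFst, ← ContinuousLinearMap.sub_comp]
  exact (ContinuousLinearMap.opNorm_comp_le _ _).trans
    (mul_le_of_le_one_right (norm_nonneg _) (ContinuousLinearMap.norm_inl_le_one ℝ E V))

theorem continuous_fderivFst {F : E × V → G} (hF : Continuous (fderiv ℝ F)) :
    Continuous fun q : E × V => fderivFst F q.1 q.2 :=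
  hF.clm_comp continuous_const

end Derivatives

section InnerSL

variable {E F : Type*} [NormedAddCommGroup E] [InnerProductSpace ℝ E] [NormedAddCommGroup F]
  [NormedSpace ℝ F]

theorem norm_innerSL_comp_sub_le (p : E) (A : F →L[ℝ] E) (B : F →L[ℝ] ℝ) :
    ‖innerSL ℝ p ∘L A - B‖ ≤ ‖p‖ * ‖A‖ + ‖B‖ := by
  refine (norm_sub_le _ _).trans (add_le_add ?_ le_rfl)
  simpa only [innerSL_apply_norm] using ContinuousLinearMap.opNorm_comp_le (innerSL ℝ p) A

theorem norm_innerSL_comp_sub_sub_le (p₁ p₂ : E) (A₁ A₂ : F →L[ℝ] E) (B₁ B₂ : F →L[ℝ] ℝ) :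
    ‖(innerSL ℝ p₁ ∘L A₁ - B₁) - (innerSL ℝ p₂ ∘L A₂ - B₂)‖
      ≤ ‖p₁ - p₂‖ * ‖A₁‖ + ‖p₂‖ * ‖A₁ - A₂‖ + ‖B₁ - B₂‖ := by
  have hsplit : (innerSL ℝ p₁ ∘L A₁ - B₁) - (innerSL ℝ p₂ ∘L A₂ - B₂)
      = innerSL ℝ (p₁ - p₂) ∘L A₁ + innerSL ℝ p₂ ∘L (A₁ - A₂) - (B₁ - B₂) := by
    rw [map_sub, ContinuousLinearMap.sub_comp, ContinuousLinearMap.comp_sub]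
    abel
  rw [hsplit]
  refine (norm_sub_le _ _).trans (add_le_add ((norm_add_le _ _).trans (add_le_add ?_ ?_)) le_rfl)
  · simpa only [innerSL_apply_norm] using
      ContinuousLinearMap.opNorm_comp_le (innerSL ℝ (p₁ - p₂)) A₁
  · simpa only [innerSL_apply_norm] using
      ContinuousLinearMap.opNorm_comp_le (innerSL ℝ p₂) (A₁ - A₂)

end InnerSL

section Hamiltonian

open Function

variable {d m : ℕ} {f : Ed d → Ed m → Ed d} {L : Ed d → Ed m → ℝ}

def hamGrad (f : Ed d → Ed m → Ed d) (L : Ed d → Ed m → ℝ) (x p : Ed d) (v : Ed m) : Ed d :=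
  gradient (fun x' => Ham f L x' p v) x

theorem hamGrad_eq (hf : Differentiable ℝ (uncurry f)) (hL : Differentiable ℝ (uncurry L))
    (x p : Ed d) (v : Ed m) :
    hamGrad f L x p v = (InnerProductSpace.toDual ℝ (Ed d)).symm
      (innerSL ℝ p ∘L fderivFst (uncurry f) x v - fderivFst (uncurry L) x v) := by
  have h : HasFDerivAt (fun x' => Ham f L x' p v)
      (innerSL ℝ p ∘L fderivFst (uncurry f) x v - fderivFst (uncurry L) x v) x :=
    ((innerSL ℝ p).hasFDerivAt.comp x (hasFDerivAt_fderivFst (hf _))).sub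
      (hasFDerivAt_fderivFst (hL _))
  rw [hamGrad, gradient, h.fderiv]

variable {K : NNReal} (hf : ContDiff ℝ 1 (uncurry f)) (hL : ContDiff ℝ 1 (uncurry L))
  (hfd : ∀ q, ‖fderiv ℝ (uncurry f) q‖ ≤ K)
include hf hL

theorem continuous_hamGrad :
    Continuous fun z : Ed d × Ed d × Ed m => hamGrad f L z.1 z.2.1 z.2.2 := by
  simp_rw [hamGrad_eq (hf.differentiable one_ne_zero) (hL.differentiable one_ne_zero)]
  have hxv : Continuous fun z : Ed d × Ed d × Ed m => (z.1, z.2.2) := by fun_prop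
  refine (InnerProductSpace.toDual ℝ (Ed d)).symm.continuous.comp (Continuous.sub ?_
    ((continuous_fderivFst (hL.continuous_fderiv one_ne_zero)).comp hxv))
  exact ((innerSL ℝ).continuous.comp (continuous_fst.comp continuous_snd)).clm_comp
    ((continuous_fderivFst (hf.continuous_fderiv one_ne_zero)).comp hxv)

include hfd

theorem norm_hamGrad_le (hLd : ∀ q, ‖fderiv ℝ (uncurry L) q‖ ≤ K) (x p : Ed d) (v : Ed m) :
    ‖hamGrad f L x p v‖ ≤ K * (1 + ‖p‖) := by
  rw [hamGrad_eq (hf.differentiable one_ne_zero) (hL.differentiable one_ne_zero),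
    LinearIsometryEquiv.norm_map]
  calc _ ≤ ‖p‖ * ‖fderivFst (uncurry f) x v‖ + ‖fderivFst (uncurry L) x v‖ :=
        norm_innerSL_comp_sub_le _ _ _
    _ ≤ ‖p‖ * K + K := by
        gcongr
        exacts [(norm_fderivFst_le _ _ _).trans (hfd _), (norm_fderivFst_le _ _ _).trans (hLd _)]
    _ = K * (1 + ‖p‖) := by ring

theorem norm_hamGrad_sub_le (hfdL : LipschitzWith K (fderiv ℝ (uncurry f)))
    (hLdL : LipschitzWith K (fderiv ℝ (uncurry L))) (x₁ x₂ p₁ p₂ : Ed d) (v₁ v₂ : Ed m) :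
    ‖hamGrad f L x₁ p₁ v₁ - hamGrad f L x₂ p₂ v₂‖
      ≤ K * ‖p₁ - p₂‖ + K * (‖p₂‖ + 1) * (‖x₁ - x₂‖ + ‖v₁ - v₂‖) := by
  rw [hamGrad_eq (hf.differentiable one_ne_zero) (hL.differentiable one_ne_zero),
    hamGrad_eq (hf.differentiable one_ne_zero) (hL.differentiable one_ne_zero),
    ← LinearIsometryEquiv.map_sub, LinearIsometryEquiv.norm_map]
  refine (norm_innerSL_comp_sub_sub_le _ _ _ _ _ _).trans ?_
  have hA := (norm_fderivFst_le (uncurry f) x₁ v₁).trans (hfd _)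
  have hΔA := (norm_fderivFst_sub_le (uncurry f) x₁ x₂ v₁ v₂).trans
    (hfdL.norm_sub_le_mul_add x₁ x₂ v₁ v₂)
  have hΔB := (norm_fderivFst_sub_le (uncurry L) x₁ x₂ v₁ v₂).trans
    (hLdL.norm_sub_le_mul_add x₁ x₂ v₁ v₂)
  calc _ ≤ ‖p₁ - p₂‖ * K + ‖p₂‖ * (K * (‖x₁ - x₂‖ + ‖v₁ - v₂‖))
        + K * (‖x₁ - x₂‖ + ‖v₁ - v₂‖) := by gcongr
    _ = _ := by ring

end Hamiltonian

section Flows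

open Function

variable {d m : ℕ} {T : ℝ} {θ : ℝ → Ed m} {x : ℝ → Ed d}

theorem intervalIntegrable_state {f : Ed d → Ed m → Ed d} {x₀ : Ed d} {Cf : ℝ} (hT : 0 ≤ T)
    (hf : Continuous (uncurry f)) (hfB : ∀ x v, ‖f x v‖ ≤ Cf) (hθ : Measurable θ)
    (hx : ∀ t, x t = x₀ + ∫ s in 0..t, f (x s) (θ s)) :
    IntervalIntegrable (fun s => f (x s) (θ s)) volume 0 T :=
  intervalIntegrable_of_eq_add_integral (g₀ := fun s => f x₀ (θ s)) hT hx (fun s _ => hfB _ _)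
    ((hf.comp (continuous_const.prodMk continuous_id)).measurable.comp hθ).aestronglyMeasurable
    fun s _ hs => by rw [hs]

/- Where `p s = c`, the integrand is `G (x s) c (θ s)`, measurable once `x` is extended from
`[0, T]` to a continuous function on `ℝ`. -/
theorem intervalIntegrable_costate {G : Ed d → Ed d → Ed m → Ed d} {c : Ed d} {p : ℝ → Ed d}
    {K M : ℝ} (hT : 0 ≤ T) (hG : Continuous fun z : Ed d × Ed d × Ed m => G z.1 z.2.1 z.2.2)
    (hGb : ∀ x p v, ‖G x p v‖ ≤ K * (1 + ‖p‖)) (hx : ContinuousOn x (Icc 0 T))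
    (hθ : Measurable θ) (hp : ∀ t, p t = c + ∫ s in t..T, G (x s) (p s) (θ s))
    (hpM : ∀ t ∈ Icc 0 T, ‖p t‖ ≤ M) :
    IntervalIntegrable (fun s => G (x s) (p s) (θ s)) volume 0 T := by
  have hK : 0 ≤ K := by simpa using (norm_nonneg _).trans (hGb 0 0 0)
  have hxe : Continuous fun s => x (projIcc 0 T hT s) :=
    hx.domRestrict.comp continuous_projIcc
  refine intervalIntegrable_of_eq_add_integral_rev
    (g₀ := fun s => G (x (projIcc 0 T hT s)) c (θ s)) hT hp (C := K * (1 + M))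
    (fun s hs => (hGb _ _ _).trans ?_) ?_ fun s hs hps => by rw [hps, projIcc_of_mem hT hs]
  · exact mul_le_mul_of_nonneg_left (by linarith [hpM s hs]) hK
  · exact (hG.measurable.comp (hxe.measurable.prodMk
      (measurable_const.prodMk hθ))).aestronglyMeasurable

end Flows

section PMP

open Function

variable {d m : ℕ} {f : Ed d → Ed m → Ed d} {L : Ed d → Ed m → ℝ} {c : Ed d → Ed d}
  {Cf : ℝ} {K : NNReal} {T : ℝ}
  (hT : 0 ≤ T) (hKT : (K : ℝ) * T ≤ 1 / 2)
  (hfB : ∀ x v, ‖f x v‖ ≤ Cf) (hf : ContDiff ℝ 1 (uncurry f)) (hL : ContDiff ℝ 1 (uncurry L))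
  (hfd : ∀ q, ‖fderiv ℝ (uncurry f) q‖ ≤ K) (hLd : ∀ q, ‖fderiv ℝ (uncurry L) q‖ ≤ K)
  (hc : ∀ x, ‖c x‖ ≤ K)
include hT hKT hfB hf hL hfd hLd hc

theorem pmp_flow_regular {x₀ : Ed d} {θ : ℝ → Ed m} {x p : ℝ → Ed d} (hθ : Measurable θ)
    (hx : ∀ t, x t = x₀ + ∫ s in 0..t, f (x s) (θ s))
    (hp : ∀ t, p t = c (x T) + ∫ s in t..T, hamGrad f L (x s) (p s) (θ s)) :
    IntervalIntegrable (fun s => f (x s) (θ s)) volume 0 T ∧ ContinuousOn x (Icc 0 T) ∧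
      (∀ t ∈ Icc 0 T, ‖p t‖ ≤ 2 * K + 1) ∧
      IntervalIntegrable (fun s => hamGrad f L (x s) (p s) (θ s)) volume 0 T ∧
      ContinuousOn p (Icc 0 T) := by
  have hi := intervalIntegrable_state hT hf.continuous hfB hθ hx
  have hxc := continuousOn_of_eq_add_integral hT hx hi
  have hM : ∀ t ∈ Icc 0 T, ‖p t‖ ≤ 2 * K + 1 := fun t =>
    norm_le_of_eq_add_integral_rev hKT (hc _) hp fun s _ => norm_hamGrad_le hf hL hfd hLd _ _ _
  have hj := intervalIntegrable_costate hT (continuous_hamGrad hf hL)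
    (norm_hamGrad_le hf hL hfd hLd) hxc hθ hp hM
  exact ⟨hi, hxc, hM, hj, continuousOn_of_eq_add_integral_rev hT hp hj⟩

theorem supNormIcc_add_le_of_isAdmissible (hcL : ∀ x₁ x₂, ‖c x₁ - c x₂‖ ≤ K * ‖x₁ - x₂‖)
    (hfdL : LipschitzWith K (fderiv ℝ (uncurry f)))
    (hLdL : LipschitzWith K (fderiv ℝ (uncurry L))) {Θ : Set (Ed m)} {x₀ : Ed d}
    {θ₁ θ₂ : ℝ → Ed m} {x₁ x₂ p₁ p₂ : ℝ → Ed d}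
    (hθ₁ : IsAdmissible Θ θ₁) (hθ₂ : IsAdmissible Θ θ₂)
    (hx₁ : ∀ t, x₁ t = x₀ + ∫ s in 0..t, f (x₁ s) (θ₁ s))
    (hx₂ : ∀ t, x₂ t = x₀ + ∫ s in 0..t, f (x₂ s) (θ₂ s))
    (hp₁ : ∀ t, p₁ t = c (x₁ T) + ∫ s in t..T, hamGrad f L (x₁ s) (p₁ s) (θ₁ s))
    (hp₂ : ∀ t, p₂ t = c (x₂ T) + ∫ s in t..T, hamGrad f L (x₂ s) (p₂ s) (θ₂ s)) :
    supNormIcc T (x₁ - x₂) + supNormIcc T (p₁ - p₂)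
      ≤ (12 * K ^ 2 + 10 * K) * T * supNormIcc T (θ₁ - θ₂) := by
  obtain ⟨hi₁, hxc₁, -, hj₁, hpc₁⟩ :=
    pmp_flow_regular hT hKT hfB hf hL hfd hLd hc hθ₁.1 hx₁ hp₁
  obtain ⟨hi₂, hxc₂, hM₂, hj₂, hpc₂⟩ :=
    pmp_flow_regular hT hKT hfB hf hL hfd hLd hc hθ₂.1 hx₂ hp₂
  have hfL : ∀ x₁ x₂ v₁ v₂, ‖f x₁ v₁ - f x₂ v₂‖ ≤ K * (‖x₁ - x₂‖ + ‖v₁ - v₂‖) :=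
    (lipschitzWith_of_nnnorm_fderiv_le (hf.differentiable one_ne_zero) hfd).norm_sub_le_mul_add
  have hX : BddAbove ((fun t => ‖(x₁ - x₂) t‖) '' Icc 0 T) :=
    isCompact_Icc.bddAbove_image (hxc₁.sub hxc₂).norm
  have hP : BddAbove ((fun t => ‖(p₁ - p₂) t‖) '' Icc 0 T) :=
    isCompact_Icc.bddAbove_image (hpc₁.sub hpc₂).norm
  have hΘ : BddAbove ((fun t => ‖(θ₁ - θ₂) t‖) '' Icc 0 T) := by
    obtain ⟨C₁, hC₁⟩ := hθ₁.2.2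
    obtain ⟨C₂, hC₂⟩ := hθ₂.2.2
    exact ⟨C₁ + C₂, by
      rintro _ ⟨t, -, rfl⟩
      exact (norm_sub_le _ _).trans (add_le_add (hC₁ t) (hC₂ t))⟩
  have hXΘ := supNormIcc_sub_le_of_eq_add_integral K.coe_nonneg hT hKT hfL hx₁ hx₂ hi₁ hi₂ hX hΘ
  have hPXΘ := supNormIcc_sub_le_of_eq_add_integral_rev K.coe_nonneg hT hKT hcL
    (norm_hamGrad_sub_le hf hL hfd hfdL hLdL) hp₁ hp₂ hj₁ hj₂ hM₂ hX hP hΘ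
  have hX_le : supNormIcc T (x₁ - x₂) ≤ supNormIcc T (θ₁ - θ₂) := by
    nlinarith [mul_le_mul_of_nonneg_right hKT (supNormIcc_nonneg T (θ₁ - θ₂))]
  have hKT0 : (0 : ℝ) ≤ K * T := mul_nonneg K.coe_nonneg hT
  nlinarith [mul_le_mul_of_nonneg_left hX_le (by positivity : (0 : ℝ) ≤ 2 * K * (2 * K + 2) * T),
    mul_le_mul_of_nonneg_left hXΘ (by positivity : (0 : ℝ) ≤ 2 * K)]

end PMP

theorem small_time_lipschitz_estimate_for_pmp_flows_general
    {d l m : ℕ} (Θ : Set (Ed m)) (x₀ : Ed d) (y₀ : Ed l)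
    (f : Ed d → Ed m → Ed d) (L : Ed d → Ed m → ℝ) (Φ : Ed d → Ed l → ℝ)
    -- (A1''): f bounded
    (Cf : ℝ) (hfB : ∀ x v, ‖f x v‖ ≤ Cf)
    -- (A1''): twice continuous differentiability in (x, θ)
    (hf : ContDiff ℝ 2 fun q : Ed d × Ed m => f q.1 q.2)
    (hL : ContDiff ℝ 2 fun q : Ed d × Ed m => L q.1 q.2)
    -- (A1''): bounded, Lipschitz partial derivatives
    (Kd : NNReal)
    (hfd : ∀ q, ‖fderiv ℝ (fun q : Ed d × Ed m => f q.1 q.2) q‖ ≤ Kd)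
    (hfdL : LipschitzWith Kd (fderiv ℝ fun q : Ed d × Ed m => f q.1 q.2))
    (hLd : ∀ q, ‖fderiv ℝ (fun q : Ed d × Ed m => L q.1 q.2) q‖ ≤ Kd)
    (hLdL : LipschitzWith Kd (fderiv ℝ fun q : Ed d × Ed m => L q.1 q.2))
    (hΦd : ∀ x, ‖gradient (fun x' => Φ x' y₀) x‖ ≤ Kd)
    (hΦdL : LipschitzWith Kd (gradient fun x' => Φ x' y₀)) :
    ∃ T₀ > (0:ℝ), ∃ C : ℝ → ℝ,
      (∀ T : ℝ, 0 ≤ T → 0 < C T) ∧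
      Tendsto C (nhdsWithin 0 (Ioi (0:ℝ))) (nhds 0) ∧
      ∀ T : ℝ, 0 ≤ T → T < T₀ →
        ∀ θ1 θ2 : ℝ → Ed m, IsAdmissible Θ θ1 → IsAdmissible Θ θ2 →
        ∀ x1 x2 p1 p2 : ℝ → Ed d,
          (∀ t, x1 t = x₀ + ∫ s in (0:ℝ)..t, f (x1 s) (θ1 s)) →
          (∀ t, x2 t = x₀ + ∫ s in (0:ℝ)..t, f (x2 s) (θ2 s)) →
          (∀ t, p1 t = -gradient (fun x => Φ x y₀) (x1 T)
            + ∫ s in t..T,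
                gradient (fun x => Ham f L x (p1 s) (θ1 s)) (x1 s)) →
          (∀ t, p2 t = -gradient (fun x => Φ x y₀) (x2 T)
            + ∫ s in t..T,
                gradient (fun x => Ham f L x (p2 s) (θ2 s)) (x2 s)) →
          (⨆ t : Icc (0:ℝ) T, ‖x1 t - x2 t‖)
              + (⨆ t : Icc (0:ℝ) T, ‖p1 t - p2 t‖)
            ≤ C T * ⨆ t : Icc (0:ℝ) T, ‖θ1 t - θ2 t‖ := by
  set c₀ : ℝ := 12 * (Kd : ℝ) ^ 2 + 10 * Kd
  refine ⟨(2 * (Kd + 1 : ℝ))⁻¹, by positivity, fun T => if T = 0 then 1 else (c₀ + 1) * T,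
    fun T hT => ?_, ?_, fun T hT hTT₀ θ1 θ2 hθ1 hθ2 x1 x2 p1 p2 hx1 hx2 hp1 hp2 => ?_⟩
  · dsimp only
    split_ifs with h
    exacts [one_pos, mul_pos (by positivity) (hT.lt_of_ne' h)]
  · refine (tendsto_nhdsWithin_of_tendsto_nhds ((continuous_const_mul (c₀ + 1)).tendsto' 0 0
      (mul_zero _))).congr' ?_
    filter_upwards [self_mem_nhdsWithin] with T hT
    exact (if_neg hT.ne').symm
  have hKT : (Kd : ℝ) * T ≤ 1 / 2 := by
    have := mul_lt_mul_of_pos_left hTT₀ (by positivity : (0 : ℝ) < 2 * (Kd + 1))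
    rw [mul_inv_cancel₀ (by positivity)] at this
    nlinarith
  have hcL : ∀ x₁ x₂, ‖-gradient (fun x => Φ x y₀) x₁ - -gradient (fun x => Φ x y₀) x₂‖
      ≤ Kd * ‖x₁ - x₂‖ := fun x₁ x₂ => by
    simpa only [neg_sub_neg, norm_sub_rev, dist_eq_norm] using hΦdL.dist_le_mul x₁ x₂
  have hest := supNormIcc_add_le_of_isAdmissible (c := fun x => -gradient (fun x => Φ x y₀) x)
    hT hKT hfB (hf.of_le one_le_two) (hL.of_le one_le_two) hfd hLd
    (fun x => (norm_neg _).trans_le (hΦd x)) hcL hfdL hLdL hθ1 hθ2 hx1 hx2 hp1 hp2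
  refine hest.trans (mul_le_mul_of_nonneg_right ?_ (supNormIcc_nonneg _ _))
  dsimp only
  split_ifs with h
  · simp [h]
  · exact mul_le_mul_of_nonneg_right (by linarith) hT

theorem small_time_lipschitz_estimate_for_pmp_flows
    {d l m : ℕ} (Θ : Set (Ed m)) (x₀ : Ed d) (y₀ : Ed l)
    (f : Ed d → Ed m → Ed d) (L : Ed d → Ed m → ℝ) (Φ : Ed d → Ed l → ℝ)
    -- (A1''): f bounded
    (Cf : ℝ) (hfB : ∀ x v, ‖f x v‖ ≤ Cf)
    -- (A1''): twice continuous differentiability in (x, θ)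
    (hf : ContDiff ℝ 2 fun q : Ed d × Ed m => f q.1 q.2)
    (hL : ContDiff ℝ 2 fun q : Ed d × Ed m => L q.1 q.2)
    (hΦ : ContDiff ℝ 2 fun x => Φ x y₀)
    -- (A1''): bounded, Lipschitz partial derivatives
    (Kd : NNReal)
    (hfd : ∀ q, ‖fderiv ℝ (fun q : Ed d × Ed m => f q.1 q.2) q‖ ≤ Kd)
    (hfdL : LipschitzWith Kd (fderiv ℝ fun q : Ed d × Ed m => f q.1 q.2))
    (hfd2L : LipschitzWith Kd
      (fderiv ℝ (fderiv ℝ fun q : Ed d × Ed m => f q.1 q.2)))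
    (hLd : ∀ q, ‖fderiv ℝ (fun q : Ed d × Ed m => L q.1 q.2) q‖ ≤ Kd)
    (hLdL : LipschitzWith Kd (fderiv ℝ fun q : Ed d × Ed m => L q.1 q.2))
    (hLd2L : LipschitzWith Kd
      (fderiv ℝ (fderiv ℝ fun q : Ed d × Ed m => L q.1 q.2)))
    (hΦd : ∀ x, ‖gradient (fun x' => Φ x' y₀) x‖ ≤ Kd)
    (hΦdL : LipschitzWith Kd (gradient fun x' => Φ x' y₀))
    (hΦd2L : LipschitzWith Kd (fderiv ℝ (gradient fun x' => Φ x' y₀))) :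
    ∃ T₀ > (0:ℝ), ∃ C : ℝ → ℝ,
      (∀ T : ℝ, 0 ≤ T → 0 < C T) ∧
      Tendsto C (nhdsWithin 0 (Ioi (0:ℝ))) (nhds 0) ∧
      ∀ T : ℝ, 0 ≤ T → T < T₀ →
        ∀ θ1 θ2 : ℝ → Ed m, IsAdmissible Θ θ1 → IsAdmissible Θ θ2 →
        ∀ x1 x2 p1 p2 : ℝ → Ed d,
          (∀ t, x1 t = x₀ + ∫ s in (0:ℝ)..t, f (x1 s) (θ1 s)) →
          (∀ t, x2 t = x₀ + ∫ s in (0:ℝ)..t, f (x2 s) (θ2 s)) →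
          (∀ t, p1 t = -gradient (fun x => Φ x y₀) (x1 T)
            + ∫ s in t..T,
                gradient (fun x => Ham f L x (p1 s) (θ1 s)) (x1 s)) →
          (∀ t, p2 t = -gradient (fun x => Φ x y₀) (x2 T)
            + ∫ s in t..T,
                gradient (fun x => Ham f L x (p2 s) (θ2 s)) (x2 s)) →
          (⨆ t : Icc (0:ℝ) T, ‖x1 t - x2 t‖)
              + (⨆ t : Icc (0:ℝ) T, ‖p1 t - p2 t‖)
            ≤ C T * ⨆ t : Icc (0:ℝ) T, ‖θ1 t - θ2 t‖ :=
  small_time_lipschitz_estimate_for_pmp_flows_general Θ x₀ y₀ f L Φ Cf hfB hf hL Kd hfd hfdL hLd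
    hLdL hΦd hΦdL
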